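/- Let n ≥ 1 and let c be a real number. Define 𝒢 : ℝⁿ → ℝⁿ by 𝒢(x)_j = tanh(tanh(x_{j−1}) + tanh(x_j) + c) + tanh(tanh(x_j) + tanh(x_{j+1}) + c) + c, where the indices j − 1 and j + 1 are taken modulo n. If c > 2 + log(2 + √3), then 𝒢 has a globally attracting fixed point (in the sup metric on ℝⁿ). -/

import Mathlib

/-!
The map is a contraction of `ℝⁿ` with the sup metric, so Banach's fixed point theorem applies.
Each outer `tanh` is evaluated at `tanh a + tanh b + c ≥ c - 2`, where `tanh' = sech²` is at most
`sech² (c - 2)`, while the inner `tanh` are `1`-Lipschitz; hence every coordinate of `𝒢` is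
`4 sech² (c - 2)`-Lipschitz, and `4 sech² (c - 2) < 1` exactly when
`c - 2 > arcosh 2 = log (2 + √3)`.
-/

open Filter

namespace Real

theorem hasDerivAt_tanh (x : ℝ) : HasDerivAt tanh (1 / cosh x ^ 2) x := by
  have h := (hasDerivAt_sinh x).div (hasDerivAt_cosh x) (cosh_pos x).ne'
  rw [show sinh / cosh = tanh from funext fun y => (tanh_eq_sinh_div_cosh y).symm] at h
  refine h.congr_deriv ?_
  rw [← cosh_sq_sub_sinh_sq x]
  ring

theorem dist_tanh_le_of_forall_le_cosh {s : Set ℝ} (hs : Convex ℝ s) {m : ℝ} (hm : 0 < m)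
    (hcosh : ∀ x ∈ s, m ≤ cosh x) {u v : ℝ} (hu : u ∈ s) (hv : v ∈ s) :
    dist (tanh u) (tanh v) ≤ dist u v / m ^ 2 := by
  have hderiv (x : ℝ) (hx : x ∈ s) : ‖1 / cosh x ^ 2‖ ≤ 1 / m ^ 2 := by
    rw [norm_of_nonneg (by positivity)]
    gcongr
    exact hcosh x hx
  simpa only [dist_eq_norm, div_eq_inv_mul, mul_one] using
    hs.norm_image_sub_le_of_norm_hasDerivWithin_le
      (fun x _ => (hasDerivAt_tanh x).hasDerivWithinAt) hderiv hv hu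

theorem dist_tanh_le (u v : ℝ) : dist (tanh u) (tanh v) ≤ dist u v := by
  simpa using dist_tanh_le_of_forall_le_cosh convex_univ one_pos (fun x _ => one_le_cosh x)
    (Set.mem_univ u) (Set.mem_univ v)

theorem dist_tanh_le_of_le {a u v : ℝ} (ha : 0 ≤ a) (hu : a ≤ u) (hv : a ≤ v) :
    dist (tanh u) (tanh v) ≤ dist u v / cosh a ^ 2 :=
  dist_tanh_le_of_forall_le_cosh (convex_Ici a) (cosh_pos a)
    (fun x (hx : a ≤ x) =>
      cosh_le_cosh.2 (by rwa [abs_of_nonneg ha, abs_of_nonneg (ha.trans hx)]))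
    hu hv

theorem arcosh_two : arcosh 2 = log (2 + √3) := by
  norm_num [arcosh]

theorem lt_cosh_of_arcosh_lt {x y : ℝ} (hy : 1 ≤ y) (h : arcosh y < x) : y < cosh x := by
  have hx : 0 ≤ x := (arcosh_nonneg hy).trans h.le
  rw [← cosh_arcosh hy, cosh_lt_cosh, abs_of_nonneg (arcosh_nonneg hy), abs_of_nonneg hx]
  exact h

end Real

open Real

/-- The output of an eliminated vertex lying between two vertices `a`, `b` of the structural set. -/
noncomputable def tanhUnit (c a b : ℝ) : ℝ :=
  tanh (tanh a + tanh b + c)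

theorem dist_tanhUnit_le {c : ℝ} (hc : 2 ≤ c) (a b a' b' : ℝ) :
    dist (tanhUnit c a b) (tanhUnit c a' b') ≤ (dist a a' + dist b b') / cosh (c - 2) ^ 2 := by
  have hlower (u v : ℝ) : c - 2 ≤ tanh u + tanh v + c := by
    linarith [neg_one_lt_tanh u, neg_one_lt_tanh v]
  calc dist (tanhUnit c a b) (tanhUnit c a' b')
      ≤ dist (tanh a + tanh b + c) (tanh a' + tanh b' + c) / cosh (c - 2) ^ 2 :=
        dist_tanh_le_of_le (by linarith) (hlower a b) (hlower a' b')
    _ ≤ (dist (tanh a) (tanh a') + dist (tanh b) (tanh b')) / cosh (c - 2) ^ 2 := by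
        rw [dist_add_right]
        gcongr
        exact dist_add_add_le _ _ _ _
    _ ≤ (dist a a' + dist b b') / cosh (c - 2) ^ 2 := by
        gcongr <;> exact dist_tanh_le _ _

/-- `𝒢` on a structural set `ι` whose vertex `j` has neighbours `prev j` and `next j`;
the theorem is the case `ι = Fin n`, `prev j = j - 1`, `next j = j + 1`. -/
noncomputable def tanhNetwork {ι : Type*} (prev next : ι → ι) (c : ℝ) (x : ι → ℝ) :
    ι → ℝ :=
  fun j => tanhUnit c (x (prev j)) (x j) + tanhUnit c (x j) (x (next j)) + c

section tanhNetwork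

variable {ι : Type*} [Fintype ι] (prev next : ι → ι) {c : ℝ}

theorem dist_tanhNetwork_le (hc : 2 ≤ c) (x y : ι → ℝ) :
    dist (tanhNetwork prev next c x) (tanhNetwork prev next c y) ≤
      4 / cosh (c - 2) ^ 2 * dist x y := by
  have hunit (i i' : ι) : dist (tanhUnit c (x i) (x i')) (tanhUnit c (y i) (y i')) ≤
      2 / cosh (c - 2) ^ 2 * dist x y :=
    calc _ ≤ (dist (x i) (y i) + dist (x i') (y i')) / cosh (c - 2) ^ 2 :=
          dist_tanhUnit_le hc _ _ _ _
      _ ≤ (dist x y + dist x y) / cosh (c - 2) ^ 2 := by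
          gcongr <;> exact dist_le_pi_dist x y _
      _ = 2 / cosh (c - 2) ^ 2 * dist x y := by ring
  refine (dist_pi_le_iff (by positivity)).2 fun j => ?_
  calc dist (tanhNetwork prev next c x j) (tanhNetwork prev next c y j)
      ≤ dist (tanhUnit c (x (prev j)) (x j)) (tanhUnit c (y (prev j)) (y j)) +
          dist (tanhUnit c (x j) (x (next j))) (tanhUnit c (y j) (y (next j))) := by
        rw [tanhNetwork, tanhNetwork, dist_add_right]
        exact dist_add_add_le _ _ _ _
    _ ≤ 2 / cosh (c - 2) ^ 2 * dist x y + 2 / cosh (c - 2) ^ 2 * dist x y :=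
        add_le_add (hunit _ _) (hunit _ _)
    _ = 4 / cosh (c - 2) ^ 2 * dist x y := by ring

theorem contractingWith_tanhNetwork (hc : 2 + arcosh 2 < c) :
    ContractingWith (4 / cosh (c - 2) ^ 2).toNNReal (tanhNetwork prev next c) := by
  have hcosh : 2 < cosh (c - 2) := lt_cosh_of_arcosh_lt one_le_two (by linarith)
  refine ⟨toNNReal_lt_one.2 ?_, LipschitzWith.of_dist_le' <|
    dist_tanhNetwork_le prev next (by linarith [arcosh_nonneg one_le_two])⟩
  rw [div_lt_one (by positivity)]
  nlinarith

end tanhNetwork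

/-- The restricted network
`𝒢(x)_j = tanh(tanh(x_{j−1}) + tanh(x_j) + c) + tanh(tanh(x_j) + tanh(x_{j+1}) + c) + c`
on `ℝⁿ` (indices mod `n`) has a globally attracting fixed point whenever
`c > 2 + log(2 + √3)`, i.e. `c > 2 + sech⁻¹(1/2)`. -/
theorem restricted_tanh_network_stability
    {n : ℕ} [NeZero n] (c : ℝ)
    (hc : c > 2 + Real.log (2 + Real.sqrt 3)) :
    ∃ p : Fin n → ℝ,
      (fun j => Real.tanh (Real.tanh (p (j - 1)) + Real.tanh (p j) + c) +
          Real.tanh (Real.tanh (p j) + Real.tanh (p (j + 1)) + c) + c) = p ∧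
      ∀ x : Fin n → ℝ,
        Tendsto
          (fun k =>
            (fun x : Fin n → ℝ => fun j =>
              Real.tanh (Real.tanh (x (j - 1)) + Real.tanh (x j) + c) +
                Real.tanh (Real.tanh (x j) + Real.tanh (x (j + 1)) + c) + c)^[k] x)
          atTop (nhds p) := by
  have hG := contractingWith_tanhNetwork (fun j : Fin n => j - 1) (fun j => j + 1)
    (c := c) (by rwa [arcosh_two])
  exact ⟨_, hG.fixedPoint_isFixedPt, hG.tendsto_iterate_fixedPoint⟩
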